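/- If there is a sequence (s_n) of positive integers such that every vertex v of T has exactly s_{|v|+1} children, then the forward shift S is an isometry on H^p(T). -/

import Mathlib

open scoped BigOperators
open Classical

/-- An infinite, locally finite rooted tree, presented combinatorially via a
parent function and a level (distance-to-root) function.  Every level is a
finite nonempty set of vertices. -/
structure HTree where
  V : Type
  root : V
  parent : V → V
  level : V → ℕ
  level_root : level root = 0
  root_of_level_zero : ∀ v, level v = 0 → v = root
  level_parent : ∀ v, v ≠ root → level (parent v) + 1 = level v
  finite_level : ∀ n : ℕ, {v : V | level v = n}.Finite
  nonempty_level : ∀ n : ℕ, {v : V | level v = n}.Nonempty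

namespace HTree

variable (T : HTree)

/-- The finite set of vertices at level `n`. -/
noncomputable def levelFinset (n : ℕ) : Finset T.V := (T.finite_level n).toFinset

/-- `γ(n)`, the number of vertices at level `n`. -/
noncomputable def gamma (n : ℕ) : ℕ := (T.levelFinset n).card

/-- The set of `m`-children of a vertex `v`. -/
noncomputable def nChildrenFinset (m : ℕ) (v : T.V) : Finset T.V :=
  (T.levelFinset (T.level v + m)).filter (fun w => T.parent^[m] w = v)

/-- `γ(m,v)`, the number of `m`-children of `v`. -/
noncomputable def numNChildren (m : ℕ) (v : T.V) : ℕ := (T.nChildrenFinset m v).card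

/-- The set of children of a vertex. -/
noncomputable def childrenFinset (v : T.V) : Finset T.V := T.nChildrenFinset 1 v

/-- `γ(1,v)`, the number of children of `v`. -/
noncomputable def numChildren (v : T.V) : ℕ := T.numNChildren 1 v

/-- `K(m,r)`, the maximal number of `m`-children among vertices at level `r`. -/
noncomputable def K (m r : ℕ) : ℕ := (T.levelFinset r).sup (fun v => T.numNChildren m v)

/-- `M_p^p(n,f)`, the `p`-th power of the `p`-th mean of `|f|` over level `n`. -/
noncomputable def Mpp (p : ℝ) (f : T.V → ℂ) (n : ℕ) : ℝ :=
  (1 / (T.gamma n : ℝ)) * ∑ v ∈ T.levelFinset n, ‖f v‖ ^ p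

/-- `M_p(n,f)`, the `p`-th mean of `|f|` over level `n`. -/
noncomputable def Mp (p : ℝ) (f : T.V → ℂ) (n : ℕ) : ℝ := (T.Mpp p f n) ^ (1 / p)

/-- Membership in the Hardy space `H^p(T)`. -/
def MemHp (p : ℝ) (f : T.V → ℂ) : Prop := ∃ C : ℝ, ∀ n : ℕ, T.Mp p f n ≤ C

/-- Membership in the little Hardy space `H^p_0(T)`. -/
def MemHp0 (p : ℝ) (f : T.V → ℂ) : Prop :=
  Filter.Tendsto (T.Mp p f) Filter.atTop (nhds 0)

/-- The `H^p` norm, `sup_n M_p(n,f)`. -/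
noncomputable def Hnorm (p : ℝ) (f : T.V → ℂ) : ℝ := ⨆ n : ℕ, T.Mp p f n

/-- The forward shift `(Sf)(v) = f(parent v)`, `(Sf)(root) = 0`. -/
noncomputable def S (f : T.V → ℂ) : T.V → ℂ := fun v => if v = T.root then 0 else f (T.parent v)

/-- The backward shift `(Bf)(v) = Σ_{w child of v} f(w)`. -/
noncomputable def B (f : T.V → ℂ) : T.V → ℂ := fun v => ∑ w ∈ T.childrenFinset v, f w

/-- An operator `A` is bounded on the subspace described by `Mem`, with the
`H^p` norm. -/
def BoundedOn (A : (T.V → ℂ) → (T.V → ℂ)) (Mem : (T.V → ℂ) → Prop) (p : ℝ) : Prop :=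
  ∃ C : ℝ, 0 ≤ C ∧ ∀ f, Mem f → Mem (A f) ∧ T.Hnorm p (A f) ≤ C * T.Hnorm p f

/-- The operator norm of `A` on the subspace described by `Mem`. -/
noncomputable def opNorm (A : (T.V → ℂ) → (T.V → ℂ)) (Mem : (T.V → ℂ) → Prop) (p : ℝ) : ℝ :=
  sInf {C : ℝ | 0 ≤ C ∧ ∀ f, Mem f → Mem (A f) ∧ T.Hnorm p (A f) ≤ C * T.Hnorm p f}

/-- Hypercyclicity of an operator `A` on the subspace described by `Mem`. -/
def Hypercyclic (A : (T.V → ℂ) → (T.V → ℂ)) (Mem : (T.V → ℂ) → Prop) (p : ℝ) : Prop :=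
  ∃ f, Mem f ∧ ∀ g, Mem g → ∀ ε : ℝ, 0 < ε →
    ∃ N : ℕ, T.Hnorm p (fun v => A^[N] f v - g v) < ε

end HTree


/-!
Level `n + 1` of the tree is partitioned into the children of the vertices of level `n`, so
summing `g ∘ parent` over level `n + 1` counts every value on level `n` once per child. When all
vertices of level `n` have `s (n + 1)` children, both `γ(n + 1)` and `Σ_{|v| = n + 1} |Sf(v)|^p`
are `s (n + 1)` times their level-`n` counterparts, hence `M_p(n + 1, Sf) = M_p(n, f)`. Together
with `M_p(0, Sf) ≤ M_p(0, f)` (as `Sf` vanishes at the root) this makes the two suprema equal.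
-/

open Finset Set

lemma ciSup_eq_of_succ_eq {a b : ℕ → ℝ} (ha : BddAbove (range a)) (h0 : b 0 ≤ a 0)
    (hsucc : ∀ n, b (n + 1) = a n) : BddAbove (range b) ∧ ⨆ n, b n = ⨆ n, a n := by
  have hb_le : ∀ n, b n ≤ ⨆ n, a n := by
    rintro (_ | n)
    · exact h0.trans (le_ciSup ha 0)
    · exact (hsucc n).symm ▸ le_ciSup ha n
  have hb : BddAbove (range b) := ⟨_, forall_mem_range.2 hb_le⟩
  refine ⟨hb, le_antisymm (ciSup_le hb_le) (ciSup_le fun n => ?_)⟩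
  exact (hsucc n) ▸ le_ciSup hb (n + 1)

namespace HTree

variable {T : HTree}

lemma mem_levelFinset {n : ℕ} {v : T.V} : v ∈ T.levelFinset n ↔ T.level v = n :=
  Set.Finite.mem_toFinset _

lemma ne_root_of_level_eq_succ {n : ℕ} {v : T.V} (hv : T.level v = n + 1) : v ≠ T.root := by
  rintro rfl
  simp [T.level_root] at hv

lemma parent_mem_levelFinset {n : ℕ} {v : T.V} (hv : v ∈ T.levelFinset (n + 1)) :
    T.parent v ∈ T.levelFinset n := by
  rw [mem_levelFinset] at hv ⊢
  have := T.level_parent v (ne_root_of_level_eq_succ hv)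
  omega

lemma childrenFinset_eq_filter {n : ℕ} {w : T.V} (hw : w ∈ T.levelFinset n) :
    T.childrenFinset w = {v ∈ T.levelFinset (n + 1) | T.parent v = w} := by
  rw [childrenFinset, nChildrenFinset, mem_levelFinset.1 hw, Function.iterate_one]

lemma sum_levelFinset_succ_comp_parent {M : Type*} [AddCommMonoid M] (g : T.V → M) (n : ℕ) :
    ∑ v ∈ T.levelFinset (n + 1), g (T.parent v)
      = ∑ w ∈ T.levelFinset n, T.numChildren w • g w := by
  rw [← sum_fiberwise_of_maps_to' (fun _ hv => parent_mem_levelFinset hv)]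
  refine sum_congr rfl fun w hw => ?_
  rw [sum_const, numChildren, numNChildren, ← childrenFinset, childrenFinset_eq_filter hw]

lemma gamma_pos (n : ℕ) : 0 < T.gamma n :=
  card_pos.2 <| let ⟨v, hv⟩ := T.nonempty_level n; ⟨v, mem_levelFinset.2 hv⟩

lemma Mp_nonneg (p : ℝ) (f : T.V → ℂ) (n : ℕ) : 0 ≤ T.Mp p f n :=
  Real.rpow_nonneg (mul_nonneg (by positivity) (sum_nonneg fun _ _ => by positivity)) _

lemma S_apply_of_ne_root (f : T.V → ℂ) {v : T.V} (hv : v ≠ T.root) :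
    T.S f v = f (T.parent v) :=
  if_neg hv

lemma Mp_S_zero_le (p : ℝ) (f : T.V → ℂ) : T.Mp p (T.S f) 0 ≤ T.Mp p f 0 := by
  by_cases hp : p = 0
  · simp [Mp, hp] -- `x ^ (0 : ℝ) = 1` for every real `x`, so all the `M_0` equal `1`
  have hSf : ∀ v ∈ T.levelFinset 0, ‖T.S f v‖ ^ p = 0 := fun v hv => by
    simp [S, T.root_of_level_zero v (mem_levelFinset.1 hv), Real.zero_rpow hp]
  rw [Mp, Mpp, sum_eq_zero hSf, mul_zero, Real.zero_rpow (one_div_ne_zero hp)]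
  exact T.Mp_nonneg p f 0

section Regular

variable {s : ℕ → ℕ} (hreg : ∀ v : T.V, T.numChildren v = s (T.level v + 1))
include hreg

lemma sum_levelFinset_succ_comp_parent_of_regular {M : Type*} [AddCommMonoid M]
    (g : T.V → M) (n : ℕ) :
    ∑ v ∈ T.levelFinset (n + 1), g (T.parent v) = s (n + 1) • ∑ w ∈ T.levelFinset n, g w := by
  rw [sum_levelFinset_succ_comp_parent, smul_sum]
  exact sum_congr rfl fun w hw => by rw [hreg, mem_levelFinset.1 hw]

lemma gamma_succ_of_regular (n : ℕ) : T.gamma (n + 1) = s (n + 1) * T.gamma n := by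
  simpa only [gamma, sum_const, smul_eq_mul, mul_one] using
    sum_levelFinset_succ_comp_parent_of_regular hreg (fun _ => (1 : ℕ)) n

lemma Mpp_S_succ (p : ℝ) (f : T.V → ℂ) (n : ℕ) : T.Mpp p (T.S f) (n + 1) = T.Mpp p f n := by
  have hsum : ∑ v ∈ T.levelFinset (n + 1), ‖T.S f v‖ ^ p
      = ∑ v ∈ T.levelFinset (n + 1), ‖f (T.parent v)‖ ^ p :=
    sum_congr rfl fun v hv => by
      rw [S_apply_of_ne_root f (ne_root_of_level_eq_succ (mem_levelFinset.1 hv))]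
  have hs : s (n + 1) ≠ 0 :=
    left_ne_zero_of_mul (gamma_succ_of_regular hreg n ▸ (T.gamma_pos (n + 1)).ne')
  rw [Mpp, Mpp, hsum,
    sum_levelFinset_succ_comp_parent_of_regular hreg (fun w => ‖f w‖ ^ p), nsmul_eq_mul,
    gamma_succ_of_regular hreg, Nat.cast_mul]
  field_simp [Nat.cast_ne_zero.2 hs, Nat.cast_ne_zero.2 (T.gamma_pos n).ne']

lemma Mp_S_succ (p : ℝ) (f : T.V → ℂ) (n : ℕ) : T.Mp p (T.S f) (n + 1) = T.Mp p f n := by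
  rw [Mp, Mpp_S_succ hreg, Mp]

end Regular

end HTree

theorem forward_shift_isometry_of_level_regular_general (T : HTree) (p : ℝ)
    (s : ℕ → ℕ)
    (hreg : ∀ v : T.V, T.numChildren v = s (T.level v + 1)) :
    ∀ f : T.V → ℂ, T.MemHp p f →
      T.MemHp p (T.S f) ∧ T.Hnorm p (T.S f) = T.Hnorm p f := by
  rintro f ⟨C, hC⟩
  obtain ⟨⟨D, hD⟩, hsup⟩ := ciSup_eq_of_succ_eq ⟨C, forall_mem_range.2 hC⟩
    (T.Mp_S_zero_le p f) (T.Mp_S_succ hreg p f)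
  exact ⟨⟨D, fun n => hD (mem_range_self n)⟩, hsup⟩

/-- if all vertices at the same level have the same number of children,
the forward shift is an isometry on `H^p(T)`. -/
theorem forward_shift_isometry_of_level_regular (T : HTree) (p : ℝ) (hp : 1 ≤ p)
    (s : ℕ → ℕ) (hs : ∀ n, 0 < s n)
    (hreg : ∀ v : T.V, T.numChildren v = s (T.level v + 1)) :
    ∀ f : T.V → ℂ, T.MemHp p f →
      T.MemHp p (T.S f) ∧ T.Hnorm p (T.S f) = T.Hnorm p f :=
  forward_shift_isometry_of_level_regular_general T p s hreg
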